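/- arXiv:2311.05972 — 5 statements merged into one kernel-verified Lean document; each statement's English description precedes it below -/
import Mathlib

section
/- If g is holomorphic on the unit disc and q ≥ 1, then the function v(z) = |∇|g|^q|(z)^2 = q^2 |g(z)|^{2q-2} |g'(z)|^2 is a nonnegative subharmonic function on the unit disc. -/
/-!
Write `β = 2q - 2`. Where `g` and `g'` do not vanish, `|g|^β |g'|² = exp u` with
`u = β log |g| + 2 log |g'|`. Jensen's formula gives `u z ≤ avg u` over every circle about `z`,
and since `exp` is increasing and convex, `exp (u z) ≤ exp (avg u) ≤ avg (exp u)`. The zeros of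
`g` and `g'` on a circle are isolated, so they do not change the average, and at a zero in the
centre the inequality is trivial (for `β = 0` the factor `|g|^β` is identically `1`).
-/

open MeasureTheory Metric

def SubharmonicOnDisc (v : ℂ → ℝ) : Prop :=
  ContinuousOn v (Metric.ball 0 1) ∧
  ∀ z ∈ Metric.ball (0:ℂ) 1, ∀ r : ℝ, 0 < r → Metric.closedBall z r ⊆ Metric.ball (0:ℂ) 1 →
    v z ≤ (∫ θ in (0:ℝ)..(2 * Real.pi), v (z + (r : ℂ) * Complex.exp ((θ : ℂ) * Complex.I)))
            / (2 * Real.pi)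

open Real Filter

theorem AnalyticOnNhd.log_norm_le_circleAverage {c : ℂ} {R : ℝ} {f : ℂ → ℂ} (hR : R ≠ 0)
    (hf : AnalyticOnNhd ℂ f (closedBall c |R|)) (hfc : f c ≠ 0) :
    Real.log ‖f c‖ ≤ circleAverage (Real.log ‖f ·‖) c R := by
  -- in Jensen's formula each zero `u` of `f` contributes a multiple of `log (R / ‖c - u‖) ≥ 0`
  rw [hf.circleAverage_log_norm hR hfc, le_add_iff_nonneg_left]
  refine finsum_nonneg fun u ↦ ?_
  by_cases hu : u ∈ closedBall c |R|
  · refine mul_nonneg (mod_cast MeromorphicOn.AnalyticOnNhd.divisor_nonneg hf u) ?_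
    rcases eq_or_ne u c with rfl | huc
    · simp
    rw [← Real.log_abs, abs_mul, abs_inv, abs_norm]
    refine Real.log_nonneg ((one_le_div (norm_pos_iff.2 (sub_ne_zero.2 huc.symm))).2 ?_)
    simpa [dist_eq_norm, norm_sub_rev] using hu
  · simp [hu]

theorem AnalyticOnNhd.eventually_ne_zero_codiscreteWithin_sphere {c : ℂ} {R : ℝ} {f : ℂ → ℂ}
    (hf : AnalyticOnNhd ℂ f (closedBall c |R|)) (hfc : f c ≠ 0) :
    ∀ᶠ w in codiscreteWithin (sphere c |R|), f w ≠ 0 :=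
  codiscreteWithin_mono sphere_subset_closedBall <|
    hf.preimage_zero_mem_codiscreteWithin hfc (mem_closedBall_self (abs_nonneg R))
      ((convex_closedBall c |R|).isConnected ⟨c, mem_closedBall_self (abs_nonneg R)⟩)

theorem exp_circleAverage_le {u : ℂ → ℝ} {c : ℂ} {R : ℝ} (hu : CircleIntegrable u c R)
    (hexp : CircleIntegrable (fun w ↦ exp (u w)) c R) :
    exp (circleAverage u c R) ≤ circleAverage (fun w ↦ exp (u w)) c R := by
  set m := circleAverage u c R
  -- average the tangent line `exp m * (1 + (x - m)) ≤ exp x` of `exp` at `m`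
  have htangent : ∀ x, exp m * (1 - m) + exp m • x ≤ exp x := fun x ↦ by
    have := mul_le_mul_of_nonneg_left (add_one_le_exp (x - m)) (exp_pos m).le
    rw [← exp_add, add_sub_cancel] at this
    rw [smul_eq_mul]; linarith
  have hline : CircleIntegrable (fun w ↦ exp m * (1 - m) + exp m • u w) c R :=
    (circleIntegrable_const _ _ _).fun_add hu.const_fun_smul
  calc exp m = circleAverage (fun w ↦ exp m * (1 - m) + exp m • u w) c R := by
        rw [circleAverage_fun_add (circleIntegrable_const _ _ _) hu.const_fun_smul,
          circleAverage_const, circleAverage_fun_smul, smul_eq_mul]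
        ring
    _ ≤ _ := circleAverage_mono hline hexp fun w _ ↦ htangent (u w)

theorem norm_rpow_mul_norm_rpow_le_circleAverage {f h : ℂ → ℂ} {c : ℂ} {R a b : ℝ} (hR : R ≠ 0)
    (hf : AnalyticOnNhd ℂ f (closedBall c |R|)) (hh : AnalyticOnNhd ℂ h (closedBall c |R|))
    (hfc : f c ≠ 0) (hhc : h c ≠ 0) (ha : 0 ≤ a) (hb : 0 ≤ b) :
    ‖f c‖ ^ a * ‖h c‖ ^ b ≤ circleAverage (fun w ↦ ‖f w‖ ^ a * ‖h w‖ ^ b) c R := by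
  set u : ℂ → ℝ := fun w ↦ a * Real.log ‖f w‖ + b * Real.log ‖h w‖
  have hexp_u : ∀ w, f w ≠ 0 → h w ≠ 0 → exp (u w) = ‖f w‖ ^ a * ‖h w‖ ^ b := fun w hfw hhw ↦ by
    rw [exp_add, rpow_def_of_pos (norm_pos_iff.2 hfw), rpow_def_of_pos (norm_pos_iff.2 hhw),
      mul_comm a, mul_comm b]
  have hlog_f := (hf.mono sphere_subset_closedBall).meromorphicOn.circleIntegrable_log_norm
  have hlog_h := (hh.mono sphere_subset_closedBall).meromorphicOn.circleIntegrable_log_norm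
  have hu : CircleIntegrable u c R := hlog_f.const_fun_smul.fun_add hlog_h.const_fun_smul
  have hae : (fun w ↦ exp (u w)) =ᶠ[codiscreteWithin (sphere c |R|)]
      fun w ↦ ‖f w‖ ^ a * ‖h w‖ ^ b := by
    filter_upwards [hf.eventually_ne_zero_codiscreteWithin_sphere hfc,
      hh.eventually_ne_zero_codiscreteWithin_sphere hhc] with w hfw hhw using hexp_u w hfw hhw
  have hcont : ContinuousOn (fun w ↦ ‖f w‖ ^ a * ‖h w‖ ^ b) (sphere c |R|) := by
    have hf' := (hf.mono sphere_subset_closedBall).continuousOn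
    have hh' := (hh.mono sphere_subset_closedBall).continuousOn
    exact (hf'.norm.rpow_const fun _ _ ↦ Or.inr ha).mul (hh'.norm.rpow_const fun _ _ ↦ Or.inr hb)
  have hmean : u c ≤ circleAverage u c R := by
    change _ ≤ circleAverage (fun w ↦ a • Real.log ‖f w‖ + b • Real.log ‖h w‖) c R
    rw [circleAverage_fun_add hlog_f.const_fun_smul hlog_h.const_fun_smul, circleAverage_fun_smul,
      circleAverage_fun_smul, smul_eq_mul, smul_eq_mul]
    exact add_le_add (mul_le_mul_of_nonneg_left (hf.log_norm_le_circleAverage hR hfc) ha)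
      (mul_le_mul_of_nonneg_left (hh.log_norm_le_circleAverage hR hhc) hb)
  calc ‖f c‖ ^ a * ‖h c‖ ^ b = exp (u c) := (hexp_u c hfc hhc).symm
    _ ≤ exp (circleAverage u c R) := exp_le_exp.2 hmean
    _ ≤ circleAverage (fun w ↦ exp (u w)) c R :=
        exp_circleAverage_le hu (CircleIntegrable.congr_codiscreteWithin hae.symm
          hcont.circleIntegrable')
    _ = _ := circleAverage_congr_codiscreteWithin hae hR

theorem norm_rpow_mul_norm_deriv_sq_le_circleAverage {g : ℂ → ℂ} {c : ℂ} {R β : ℝ} (hR : R ≠ 0)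
    (hg : AnalyticOnNhd ℂ g (closedBall c |R|)) (hβ : 0 ≤ β) :
    ‖g c‖ ^ β * ‖deriv g c‖ ^ 2 ≤ circleAverage (fun w ↦ ‖g w‖ ^ β * ‖deriv g w‖ ^ 2) c R := by
  have hg' := hg.deriv
  have hnonneg : 0 ≤ circleAverage (fun w ↦ ‖g w‖ ^ β * ‖deriv g w‖ ^ 2) c R :=
    circleAverage_nonneg_of_nonneg fun _ _ ↦ by positivity
  rcases eq_or_ne (deriv g c) 0 with hdc | hdc
  · simpa [hdc] using hnonneg
  rcases eq_or_ne (g c) 0 with hgc | hgc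
  · rcases hβ.eq_or_lt with rfl | hβ
    · -- `‖g w‖ ^ 0 = 1`, so only `g'` matters
      simpa only [rpow_zero, one_mul, rpow_two] using
        norm_rpow_mul_norm_rpow_le_circleAverage hR hg' hg' hdc hdc le_rfl zero_le_two
    · simpa [hgc, zero_rpow hβ.ne'] using hnonneg
  · simpa only [rpow_two] using
      norm_rpow_mul_norm_rpow_le_circleAverage hR hg hg' hgc hdc hβ zero_le_two

theorem subharmonicOnDisc_iff {v : ℂ → ℝ} :
    SubharmonicOnDisc v ↔ ContinuousOn v (ball 0 1) ∧ ∀ z ∈ ball (0 : ℂ) 1, ∀ r : ℝ, 0 < r →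
      closedBall z r ⊆ ball 0 1 → v z ≤ circleAverage v z r := by
  simp only [SubharmonicOnDisc, circleAverage_def, smul_eq_mul, inv_mul_eq_div]
  rfl

/-- If `g` is holomorphic on the unit disc and `q ≥ 1`, then
`v z = |∇|g|^q|(z)² = q² |g z|^(2q-2) |g' z|²` is a nonnegative subharmonic function
on the unit disc. -/
theorem stmt_2 (g : ℂ → ℂ) (hg : DifferentiableOn ℂ g (Metric.ball 0 1))
    (q : ℝ) (hq : 1 ≤ q) :
    (∀ z ∈ Metric.ball (0:ℂ) 1,
      0 ≤ q ^ 2 * ‖g z‖ ^ (2 * q - 2) * ‖deriv g z‖ ^ 2) ∧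
    SubharmonicOnDisc
      (fun z => q ^ 2 * ‖g z‖ ^ (2 * q - 2) * ‖deriv g z‖ ^ 2) := by
  have hβ : 0 ≤ 2 * q - 2 := by linarith
  have hgan : AnalyticOnNhd ℂ g (ball 0 1) := hg.analyticOnNhd isOpen_ball
  refine ⟨fun z _ ↦ by positivity, subharmonicOnDisc_iff.2 ⟨?_, fun z _ r hr hsub ↦ ?_⟩⟩
  · exact (continuousOn_const.mul (hg.continuousOn.norm.rpow_const fun _ _ ↦ Or.inr hβ)).mul
      (hgan.deriv.continuousOn.norm.pow 2)
  · have hmean := norm_rpow_mul_norm_deriv_sq_le_circleAverage hr.ne'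
      (hgan.mono (by rwa [abs_of_pos hr])) hβ
    simp only [mul_assoc]
    exact (mul_le_mul_of_nonneg_left hmean (sq_nonneg q)).trans_eq
      (circleAverage_fun_smul (𝕜 := ℝ) (a := q ^ 2)).symm
end

section
/- Let g be holomorphic on the unit disc and define T_g f(z) = ∫₀^z f g' and S_g f(z) = ∫₀^z f' g. Then for every n ∈ ℕ₀ and every holomorphic f on the disc with f(0) = 0, T_g^n S_g f = S_g T_g^n f − n T_g^{n+1} f. -/
/-!
Both sides are holomorphic on the disc and vanish at `0`, so by induction on `n` it suffices to
compare derivatives. Writing `T_g` and `S_g` as `z ↦ ∫_{[0,z]} H`, which on a disc is `F(z) - F(0)`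
for a primitive `F` of the holomorphic function `H`, gives `(T_g h)' = h g'` and `(S_g h)' = h' g`.
Hence `T_g h + S_g h = g h - g(0) h(0)`, and with this integration by parts formula the
derivative `(T_g^n S_g f) g'` of the left-hand side becomes that of the right-hand side.
-/

open MeasureTheory Metric

/-- The analytic paraproduct `T_g f (z) = ∫₀^z f(ζ) g'(ζ) dζ`, realized by
integrating along the segment from `0` to `z`. -/
noncomputable def Tg (g f : ℂ → ℂ) : ℂ → ℂ :=
  fun z => z * ∫ t in (0:ℝ)..1, f ((t : ℂ) * z) * deriv g ((t : ℂ) * z)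

/-- The analytic paraproduct `S_g f (z) = ∫₀^z f'(ζ) g(ζ) dζ`, realized by
integrating along the segment from `0` to `z`. -/
noncomputable def Sg (g f : ℂ → ℂ) : ℂ → ℂ :=
  fun z => z * ∫ t in (0:ℝ)..1, deriv f ((t : ℂ) * z) * g ((t : ℂ) * z)

/-- The multiplication operator `M_g f = g f`. -/
def Mg (g f : ℂ → ℂ) : ℂ → ℂ := fun z => g z * f z

theorem eq_of_hasDerivAt_of_eq_center {𝕜 E : Type*} [RCLike 𝕜] [NormedAddCommGroup E]
    [NormedSpace 𝕜 E] {F G F' : 𝕜 → E} {c z : 𝕜} {r : ℝ}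
    (hF : ∀ w ∈ ball c r, HasDerivAt F (F' w) w) (hG : ∀ w ∈ ball c r, HasDerivAt G (F' w) w)
    (hc : F c = G c) (hz : z ∈ ball c r) : F z = G z :=
  isOpen_ball.eqOn_of_deriv_eq (convex_ball c r).isPreconnected
    (fun w hw => (hF w hw).differentiableAt.differentiableWithinAt)
    (fun w hw => (hG w hw).differentiableAt.differentiableWithinAt)
    (fun w hw => (hF w hw).deriv.trans (hG w hw).deriv.symm)
    (mem_ball_self (pos_of_mem_ball hz)) hc hz

noncomputable def segmentIntegral (H : ℂ → ℂ) (z : ℂ) : ℂ :=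
  z * ∫ t in (0:ℝ)..1, H ((t : ℂ) * z)

theorem Tg_eq_segmentIntegral (g f : ℂ → ℂ) :
    Tg g f = segmentIntegral (fun w => f w * deriv g w) := rfl

theorem Sg_eq_segmentIntegral (g f : ℂ → ℂ) :
    Sg g f = segmentIntegral (fun w => deriv f w * g w) := rfl

@[simp]
theorem segmentIntegral_apply_zero (H : ℂ → ℂ) : segmentIntegral H 0 = 0 := by
  simp [segmentIntegral]

section Disc

variable {r : ℝ} {z : ℂ}

theorem ofReal_mul_mem_ball (hz : z ∈ ball (0:ℂ) r) {t : ℝ} (ht : t ∈ Set.uIcc (0:ℝ) 1) :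
    (t : ℂ) * z ∈ ball (0:ℂ) r := by
  rw [Set.uIcc_of_le zero_le_one] at ht
  simpa [Complex.real_smul] using
    ((convex_ball (0:ℂ) r).starConvex (mem_ball_self (pos_of_mem_ball hz))).smul_mem hz ht.1 ht.2

theorem segmentIntegral_eq_sub {F H : ℂ → ℂ} (hF : ∀ w ∈ ball (0:ℂ) r, HasDerivAt F (H w) w)
    (hH : ContinuousOn H (ball 0 r)) (hz : z ∈ ball (0:ℂ) r) :
    segmentIntegral H z = F z - F 0 := by
  have hderiv : ∀ t ∈ Set.uIcc (0:ℝ) 1,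
      HasDerivAt (fun s : ℝ => F ((s : ℂ) * z)) (z * H ((t : ℂ) * z)) t := by
    intro t ht
    have := (hF _ (ofReal_mul_mem_ball hz ht)).comp (t : ℂ) ((hasDerivAt_id (t : ℂ)).mul_const z)
    simpa [mul_comm] using this.comp_ofReal
  have hint : IntervalIntegrable (fun t : ℝ => z * H ((t : ℂ) * z)) volume 0 1 :=
    (continuousOn_const.mul (hH.comp (by fun_prop)
      fun _ ht => ofReal_mul_mem_ball hz ht)).intervalIntegrable
  rw [segmentIntegral, ← intervalIntegral.integral_const_mul,
    intervalIntegral.integral_eq_sub_of_hasDerivAt hderiv hint]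
  simp

theorem hasDerivAt_segmentIntegral {H : ℂ → ℂ} (hH : DifferentiableOn ℂ H (ball 0 r))
    (hz : z ∈ ball (0:ℂ) r) : HasDerivAt (segmentIntegral H) (H z) z := by
  obtain ⟨F, hF⟩ := hH.isExactOn_ball
  have heq : segmentIntegral H =ᶠ[nhds z] fun w => F w - F 0 :=
    Filter.eventually_of_mem (isOpen_ball.mem_nhds hz) fun w hw =>
      segmentIntegral_eq_sub hF hH.continuousOn hw
  exact ((hF z hz).sub_const (F 0)).congr_of_eventuallyEq heq

variable {g h : ℂ → ℂ}

theorem hasDerivAt_Tg (hg : DifferentiableOn ℂ g (ball 0 r)) (hh : DifferentiableOn ℂ h (ball 0 r))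
    (hz : z ∈ ball (0:ℂ) r) : HasDerivAt (Tg g h) (h z * deriv g z) z := by
  rw [Tg_eq_segmentIntegral]
  exact hasDerivAt_segmentIntegral (hh.mul (hg.deriv isOpen_ball)) hz

theorem hasDerivAt_Sg (hg : DifferentiableOn ℂ g (ball 0 r)) (hh : DifferentiableOn ℂ h (ball 0 r))
    (hz : z ∈ ball (0:ℂ) r) : HasDerivAt (Sg g h) (deriv h z * g z) z := by
  rw [Sg_eq_segmentIntegral]
  exact hasDerivAt_segmentIntegral ((hh.deriv isOpen_ball).mul hg) hz

theorem differentiableOn_Tg (hg : DifferentiableOn ℂ g (ball 0 r))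
    (hh : DifferentiableOn ℂ h (ball 0 r)) : DifferentiableOn ℂ (Tg g h) (ball 0 r) :=
  fun _ hz => (hasDerivAt_Tg hg hh hz).differentiableAt.differentiableWithinAt

theorem differentiableOn_Sg (hg : DifferentiableOn ℂ g (ball 0 r))
    (hh : DifferentiableOn ℂ h (ball 0 r)) : DifferentiableOn ℂ (Sg g h) (ball 0 r) :=
  fun _ hz => (hasDerivAt_Sg hg hh hz).differentiableAt.differentiableWithinAt

theorem differentiableOn_iterate_Tg (hg : DifferentiableOn ℂ g (ball 0 r))
    (hh : DifferentiableOn ℂ h (ball 0 r)) (n : ℕ) :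
    DifferentiableOn ℂ ((Tg g)^[n] h) (ball 0 r) := by
  induction n with
  | zero => exact hh
  | succ n ih => rw [Function.iterate_succ_apply']; exact differentiableOn_Tg hg ih

theorem Tg_apply_zero (g h : ℂ → ℂ) : Tg g h 0 = 0 := by
  rw [Tg_eq_segmentIntegral, segmentIntegral_apply_zero]

theorem Sg_apply_zero (g h : ℂ → ℂ) : Sg g h 0 = 0 := by
  rw [Sg_eq_segmentIntegral, segmentIntegral_apply_zero]

theorem iterate_Tg_apply_zero (hh0 : h 0 = 0) : ∀ n, (Tg g)^[n] h 0 = 0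
  | 0 => hh0
  | n + 1 => by rw [Function.iterate_succ_apply']; exact Tg_apply_zero _ _

theorem Tg_add_Sg (hg : DifferentiableOn ℂ g (ball 0 r)) (hh : DifferentiableOn ℂ h (ball 0 r))
    (hz : z ∈ ball (0:ℂ) r) : Tg g h z + Sg g h z = g z * h z - g 0 * h 0 := by
  refine eq_of_hasDerivAt_of_eq_center (G := fun w => g w * h w - g 0 * h 0)
    (fun w hw => (hasDerivAt_Tg hg hh hw).add (hasDerivAt_Sg hg hh hw)) (fun w hw => ?_)
    (by simp [Tg_apply_zero, Sg_apply_zero]) hz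
  have hgw := (hg.differentiableAt (isOpen_ball.mem_nhds hw)).hasDerivAt
  have hhw := (hh.differentiableAt (isOpen_ball.mem_nhds hw)).hasDerivAt
  exact ((hgw.mul hhw).sub_const (g 0 * h 0)).congr_deriv (by ring)

theorem iterate_Tg_Sg (hg : DifferentiableOn ℂ g (ball 0 r)) (hh : DifferentiableOn ℂ h (ball 0 r))
    (hh0 : h 0 = 0) (n : ℕ) (hz : z ∈ ball (0:ℂ) r) :
    (Tg g)^[n] (Sg g h) z = Sg g ((Tg g)^[n] h) z - n * (Tg g)^[n + 1] h z := by
  induction n generalizing z with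
  | zero => simp
  | succ n ih =>
    simp only [Function.iterate_succ_apply']
    set hn := (Tg g)^[n] h
    have hhn : DifferentiableOn ℂ hn (ball 0 r) := differentiableOn_iterate_Tg hg hh n
    have hThn := differentiableOn_Tg hg hhn
    have hSg_hn : ∀ w ∈ ball (0:ℂ) r, Sg g hn w = g w * hn w - Tg g hn w := fun w hw => by
      linear_combination Tg_add_Sg hg hhn hw - g 0 * iterate_Tg_apply_zero hh0 n
    refine eq_of_hasDerivAt_of_eq_center (F := Tg g ((Tg g)^[n] (Sg g h)))
      (G := fun w => Sg g (Tg g hn) w - ((n + 1 : ℕ) : ℂ) * Tg g (Tg g hn) w)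
      (F' := fun w => (g w * hn w - (n + 1) * Tg g hn w) * deriv g w)
      (fun w hw => ?_) (fun w hw => ?_) (by simp [Tg_apply_zero, Sg_apply_zero]) hz
    · refine (hasDerivAt_Tg hg (differentiableOn_iterate_Tg hg (differentiableOn_Sg hg hh) n)
        hw).congr_deriv ?_
      rw [ih hw, Function.iterate_succ_apply', hSg_hn w hw]
      ring
    · refine ((hasDerivAt_Sg hg hThn hw).sub
        ((hasDerivAt_Tg hg hThn hw).const_mul ((n + 1 : ℕ) : ℂ))).congr_deriv ?_
      rw [(hasDerivAt_Tg hg hhn hw).deriv]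
      push_cast
      ring

end Disc

/-- Commutator identity: for `f` holomorphic with `f 0 = 0`,
`T_g^n S_g f = S_g T_g^n f − n T_g^{n+1} f`. -/
theorem stmt_4 (g f : ℂ → ℂ) (hg : DifferentiableOn ℂ g (Metric.ball 0 1))
    (hf : DifferentiableOn ℂ f (Metric.ball 0 1)) (hf0 : f 0 = 0) (n : ℕ) :
    ∀ z ∈ Metric.ball (0:ℂ) 1,
      (Tg g)^[n] (Sg g f) z = Sg g ((Tg g)^[n] f) z - (n : ℂ) * (Tg g)^[n + 1] f z :=
  fun _ hz => iterate_Tg_Sg hg hf hf0 n hz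
end

section
/- For every q ≥ 1 and r > q, the inclusion ℬ^r ⊊ ℬ^q is proper: the function g(z) = (log(e/(1−z)))^{1/q} (any branch) belongs to ℬ^q but not to ℬ^r. -/
open Metric

/-!
On the disc, `L z = log (e / (1 - z)) = 1 - log (1 - z)` has positive real part, so
`g = L ^ (1/q)` is holomorphic with `g' = (1/q) L ^ (1/q - 1) / (1 - z)`. Hence
`s ‖g‖ ^ (s - 1) ‖g'‖ = (s/q) ‖L‖ ^ (s/q - 1) / ‖1 - z‖`. For `s = q` the power of `L`
disappears and `(1 - ‖z‖²) / ‖1 - z‖ ≤ 2`. For `s > q`, at `z = 1 - ε` the weighted quantity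
`(1 - ‖z‖²) s ‖g‖ ^ (s - 1) ‖g'‖` equals `(2 - ε) (s/q) (1 - log ε) ^ (s/q - 1)`, which blows up
as `ε → 0⁺`.
-/

namespace BlochInclusion

open Complex Filter Topology

/-- `log (e / (1 - z))`, written so that it is visibly holomorphic on the disc. -/
noncomputable def logEDivOneSub (z : ℂ) : ℂ := 1 - log (1 - z)

/-- The expression whose supremum over the disc is the `ℬ^s` seminorm of `g`. -/
noncomputable def blochDensity (s : ℝ) (g : ℂ → ℂ) (z : ℂ) : ℝ :=
  (1 - ‖z‖ ^ 2) * (s * ‖g z‖ ^ (s - 1) * ‖deriv g z‖)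

section Disc

variable {z : ℂ}

lemma re_one_sub_pos (hz : ‖z‖ < 1) : 0 < (1 - z).re := by
  have := re_le_norm z
  simp only [sub_re, one_re]
  linarith

lemma one_sub_ne_zero (hz : ‖z‖ < 1) : 1 - z ≠ 0 := fun h0 => by
  simpa [h0] using re_one_sub_pos hz

lemma re_logEDivOneSub_pos (hz : ‖z‖ < 1) : 0 < (logEDivOneSub z).re := by
  have hnorm : ‖1 - z‖ < 2 := by
    calc ‖1 - z‖ ≤ ‖(1 : ℂ)‖ + ‖z‖ := norm_sub_le 1 z
      _ < 2 := by rw [norm_one]; linarith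
  have hlog : Real.log ‖1 - z‖ < 1 :=
    (Real.log_lt_log (norm_pos_iff.2 (one_sub_ne_zero hz)) hnorm).trans
      (Real.log_two_lt_d9.trans (by norm_num))
  simp only [logEDivOneSub, sub_re, one_re, log_re]
  linarith

lemma logEDivOneSub_ne_zero (hz : ‖z‖ < 1) : logEDivOneSub z ≠ 0 := fun h0 => by
  simpa [h0] using re_logEDivOneSub_pos hz

lemma log_exp_one_div_one_sub (hz : ‖z‖ < 1) :
    log (exp 1 / (1 - z)) = logEDivOneSub z := by
  have hexp : exp 1 / (1 - z) = exp (logEDivOneSub z) := by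
    rw [logEDivOneSub, exp_sub, exp_log (one_sub_ne_zero hz)]
  have harg : |arg (1 - z)| < Real.pi / 2 :=
    abs_arg_lt_pi_div_two_iff.2 (Or.inl (re_one_sub_pos hz))
  have him : (logEDivOneSub z).im = -arg (1 - z) := by
    simp [logEDivOneSub, log_im]
  rw [abs_lt] at harg
  rw [hexp, log_exp] <;> rw [him] <;> linarith [Real.pi_pos]

lemma hasDerivAt_logEDivOneSub (hz : ‖z‖ < 1) :
    HasDerivAt logEDivOneSub (1 - z)⁻¹ z := by
  have hlog := ((hasDerivAt_id' z).const_sub 1).clog (Or.inl (re_one_sub_pos hz))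
  exact (hlog.const_sub 1).congr_deriv (by rw [neg_div, neg_neg, one_div])

lemma hasDerivAt_logEDivOneSub_cpow (c : ℂ) (hz : ‖z‖ < 1) :
    HasDerivAt (fun w => logEDivOneSub w ^ c)
      (c * logEDivOneSub z ^ (c - 1) * (1 - z)⁻¹) z :=
  (hasDerivAt_logEDivOneSub hz).cpow_const (Or.inl (re_logEDivOneSub_pos hz))

lemma blochDensity_logEDivOneSub_rpow (s : ℝ) {q : ℝ} (hq : 0 < q) (hz : ‖z‖ < 1) :
    blochDensity s (fun w => logEDivOneSub w ^ ((1 : ℂ) / (q : ℂ))) z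
      = (1 - ‖z‖ ^ 2) * ((s / q) * ‖logEDivOneSub z‖ ^ (s / q - 1) / ‖1 - z‖) := by
  have hL : 0 < ‖logEDivOneSub z‖ := norm_pos_iff.2 (logEDivOneSub_ne_zero hz)
  have hexp : (1 : ℂ) / (q : ℂ) = ((1 / q : ℝ) : ℂ) := by push_cast; ring
  have hexp' : (1 : ℂ) / (q : ℂ) - 1 = ((1 / q - 1 : ℝ) : ℂ) := by push_cast; ring
  rw [blochDensity, (hasDerivAt_logEDivOneSub_cpow _ hz).deriv, norm_mul, norm_mul, norm_inv,
    hexp', hexp, norm_cpow_real, norm_cpow_real, norm_real, Real.norm_of_nonneg (by positivity),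
    ← Real.rpow_mul hL.le]
  congr 1
  have hpow : ‖logEDivOneSub z‖ ^ (1 / q * (s - 1)) * ‖logEDivOneSub z‖ ^ (1 / q - 1)
      = ‖logEDivOneSub z‖ ^ (s / q - 1) := by
    rw [← Real.rpow_add hL]
    congr 1
    field_simp
    ring
  rw [← hpow]
  ring

end Disc

lemma one_sub_norm_sq_le_two_mul_norm_one_sub (z : ℂ) : 1 - ‖z‖ ^ 2 ≤ 2 * ‖1 - z‖ := by
  have h := norm_sub_norm_le (1 : ℂ) z
  rw [norm_one] at h
  nlinarith [sq_nonneg (1 - ‖z‖)]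

lemma blochDensity_logEDivOneSub_rpow_self_le {q : ℝ} (hq : 0 < q) {z : ℂ} (hz : ‖z‖ < 1) :
    blochDensity q (fun w => logEDivOneSub w ^ ((1 : ℂ) / (q : ℂ))) z ≤ 2 := by
  have hpos : 0 < ‖1 - z‖ := norm_pos_iff.2 (one_sub_ne_zero hz)
  rw [blochDensity_logEDivOneSub_rpow q hq hz, div_self hq.ne', sub_self, Real.rpow_zero,
    mul_one, mul_one_div, div_le_iff₀ hpos]
  exact one_sub_norm_sq_le_two_mul_norm_one_sub z

lemma logEDivOneSub_one_sub_ofReal {ε : ℝ} (hε : 0 < ε) :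
    logEDivOneSub (1 - (ε : ℂ)) = ((1 - Real.log ε : ℝ) : ℂ) := by
  rw [logEDivOneSub, sub_sub_cancel, ← ofReal_log hε.le]
  push_cast
  ring

lemma tendsto_one_sub_log_rpow_nhdsGT_zero {α : ℝ} (hα : 0 < α) :
    Tendsto (fun ε : ℝ => (1 - Real.log ε) ^ α) (𝓝[>] 0) atTop := by
  have hlog : Tendsto (fun ε : ℝ => 1 - Real.log ε) (𝓝[>] 0) atTop := by
    simpa only [Function.comp_apply, ← sub_eq_add_neg] using tendsto_atTop_add_const_left _ 1
      (tendsto_neg_atBot_atTop.comp Real.tendsto_log_nhdsGT_zero)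
  exact (tendsto_rpow_atTop hα).comp hlog

lemma le_blochDensity_logEDivOneSub_rpow_one_sub (s : ℝ) {q : ℝ} (hq : 0 < q) (hs : 0 ≤ s)
    {ε : ℝ} (hε₀ : 0 < ε) (hε₁ : ε < 1) :
    s / q * (1 - Real.log ε) ^ (s / q - 1)
      ≤ blochDensity s (fun w => logEDivOneSub w ^ ((1 : ℂ) / (q : ℂ))) (1 - (ε : ℂ)) := by
  have hz : ‖1 - (ε : ℂ)‖ = 1 - ε := by
    rw [← ofReal_one, ← ofReal_sub, norm_real, Real.norm_of_nonneg (by linarith)]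
  have hL : 0 < 1 - Real.log ε := by linarith [Real.log_neg hε₀ hε₁]
  rw [blochDensity_logEDivOneSub_rpow s hq (by rw [hz]; linarith), hz, sub_sub_cancel,
    logEDivOneSub_one_sub_ofReal hε₀, norm_real, norm_real, Real.norm_of_nonneg hL.le,
    Real.norm_of_nonneg hε₀.le]
  have hP : 0 ≤ s / q * (1 - Real.log ε) ^ (s / q - 1) := by positivity
  have hrw : (1 - (1 - ε) ^ 2) * (s / q * (1 - Real.log ε) ^ (s / q - 1) / ε)
      = (2 - ε) * (s / q * (1 - Real.log ε) ^ (s / q - 1)) := by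
    field_simp
    ring
  rw [hrw]
  nlinarith

lemma not_bddAbove_blochDensity_logEDivOneSub_rpow {q s : ℝ} (hq : 0 < q) (hqs : q < s) :
    ¬ ∃ M : ℝ, ∀ z ∈ ball (0 : ℂ) 1,
      blochDensity s (fun w => logEDivOneSub w ^ ((1 : ℂ) / (q : ℂ))) z ≤ M := by
  rintro ⟨M, hM⟩
  have hα : 0 < s / q - 1 := by rw [sub_pos, one_lt_div hq]; exact hqs
  have hgrowth := ((tendsto_one_sub_log_rpow_nhdsGT_zero hα).const_mul_atTop
    (div_pos (hq.trans hqs) hq)).eventually_gt_atTop M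
  obtain ⟨ε, hεM, hε₀, hε₁⟩ :=
    (hgrowth.and (Ioo_mem_nhdsGT zero_lt_one)).exists
  have hmem : 1 - (ε : ℂ) ∈ ball (0 : ℂ) 1 := by
    rw [mem_ball_zero_iff, ← ofReal_one, ← ofReal_sub, norm_real,
      Real.norm_of_nonneg (by linarith)]
    linarith
  exact hεM.not_ge
    ((le_blochDensity_logEDivOneSub_rpow_one_sub s hq (hq.trans hqs).le hε₀ hε₁).trans (hM _ hmem))

end BlochInclusion

open BlochInclusion in
/-- For `q ≥ 1` and `r > q`, the inclusion `ℬ^r ⊊ ℬ^q` is proper: the branch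
`g z = (log(e/(1−z)))^{1/q}` is holomorphic on the disc, has finite `ℬ^q`
seminorm, but infinite `ℬ^r` seminorm. -/
theorem stmt_13 (q r : ℝ) (hq : 1 ≤ q) (hr : q < r) :
    ∃ g : ℂ → ℂ,
      (∀ z ∈ Metric.ball (0:ℂ) 1,
        g z = Complex.log (Complex.exp 1 / (1 - z)) ^ ((1 : ℂ) / (q : ℂ))) ∧
      DifferentiableOn ℂ g (Metric.ball 0 1) ∧
      (∃ M : ℝ, ∀ z ∈ Metric.ball (0:ℂ) 1,
        (1 - ‖z‖ ^ 2) *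
          (q * ‖g z‖ ^ (q - 1) * ‖deriv g z‖) ≤ M) ∧
      ¬ (∃ M : ℝ, ∀ z ∈ Metric.ball (0:ℂ) 1,
        (1 - ‖z‖ ^ 2) *
          (r * ‖g z‖ ^ (r - 1) * ‖deriv g z‖) ≤ M) := by
  have hq₀ : 0 < q := one_pos.trans_le hq
  refine ⟨fun w => logEDivOneSub w ^ ((1 : ℂ) / (q : ℂ)), fun z hz => ?_, fun z hz => ?_,
    ⟨2, fun z hz => ?_⟩, not_bddAbove_blochDensity_logEDivOneSub_rpow hq₀ hr⟩
  all_goals rw [mem_ball_zero_iff] at hz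
  · rw [log_exp_one_div_one_sub hz]
  · exact (hasDerivAt_logEDivOneSub_cpow _ hz).differentiableAt.differentiableWithinAt
  · exact blochDensity_logEDivOneSub_rpow_self_le hq₀ hz
end

section
/- Let α > −1. Define w_α(z) = (α+1)∫_{|z|²}^1 (1−r)^α log(r/|z|²) dr for z in the unit disc. Then there is a constant 0 < c_α < 1 with c_α (1−|z|²)^{α+1} log(1/|z|²) ≤ w_α(z) ≤ (1−|z|²)^{α+1} log(1/|z|²) for all z ∈ D, z ≠ 0. -/
open MeasureTheory intervalIntegral

/-!
Write `x = |z|²`. Since `log (r / x) ≤ log (1 / x)` for `r ≤ 1` and `(α + 1) ∫ₓ¹ (1 - r)^α dr`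
equals `(1 - x)^(α + 1)`, the upper bound is immediate. For the lower bound, drop the
(nonnegative) part of the integral over `[x, m]` with `m = (1 + x) / 2`: on `[m, 1]` the
logarithm is at least `log (m / x) ≥ ½ log (1 / x)` because `m² ≥ x`, and
`(1 - m)^(α + 1) = 2^(-(α + 1)) (1 - x)^(α + 1)`. This gives `c_α = 2^(-(α + 2))`.
-/

/-- The weight `w_α` as a function of `x = |z|²`. -/
noncomputable def logWeight (α x : ℝ) : ℝ :=
  (α + 1) * ∫ r in x..1, (1 - r) ^ α * Real.log (r / x)

section

variable {α : ℝ}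

lemma integral_one_sub_rpow (hα : -1 < α) (p : ℝ) :
    ∫ r in p..1, (1 - r) ^ α = (1 - p) ^ (α + 1) / (α + 1) := by
  rw [intervalIntegral.integral_comp_sub_left (fun u : ℝ => u ^ α), sub_self,
    integral_rpow (Or.inl hα), Real.zero_rpow (by linarith), sub_zero]

lemma intervalIntegrable_one_sub_rpow (hα : -1 < α) (p q : ℝ) :
    IntervalIntegrable (fun r : ℝ => (1 - r) ^ α) volume p q := by
  simpa using (intervalIntegrable_rpow' (a := 1 - p) (b := 1 - q) hα).comp_sub_left 1

lemma intervalIntegrable_one_sub_rpow_mul_log_div (hα : -1 < α) {x p q : ℝ} (hx : x ≠ 0)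
    (hp : 0 < p) (hpq : p ≤ q) :
    IntervalIntegrable (fun r : ℝ => (1 - r) ^ α * Real.log (r / x)) volume p q := by
  refine (intervalIntegrable_one_sub_rpow hα p q).mul_continuousOn
    ((continuous_id.div_const x).continuousOn.log fun r hr => ?_)
  rw [Set.uIcc_of_le hpq] at hr
  exact div_ne_zero (hp.trans_le hr.1).ne' hx

lemma le_mul_integral_one_sub_rpow_mul_log_div (hα : -1 < α) {x p : ℝ} (hx : 0 < x)
    (hxp : x ≤ p) (hp : p ≤ 1) :
    (1 - p) ^ (α + 1) * Real.log (p / x)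
      ≤ (α + 1) * ∫ r in p..1, (1 - r) ^ α * Real.log (r / x) := by
  have hα₁ : 0 < α + 1 := by linarith
  have hmono : ∫ r in p..1, (1 - r) ^ α * Real.log (p / x)
      ≤ ∫ r in p..1, (1 - r) ^ α * Real.log (r / x) := by
    refine integral_mono_on hp ((intervalIntegrable_one_sub_rpow hα p 1).mul_const _)
      (intervalIntegrable_one_sub_rpow_mul_log_div hα hx.ne' (hx.trans_le hxp) hp)
      fun r hr => mul_le_mul_of_nonneg_left ?_ (Real.rpow_nonneg (by linarith [hr.2]) α)
    exact Real.log_le_log (div_pos (hx.trans_le hxp) hx) (by gcongr; exact hr.1)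
  rw [intervalIntegral.integral_mul_const, integral_one_sub_rpow hα] at hmono
  calc (1 - p) ^ (α + 1) * Real.log (p / x)
      = (α + 1) * ((1 - p) ^ (α + 1) / (α + 1) * Real.log (p / x)) := by field_simp
    _ ≤ _ := by gcongr

lemma mul_integral_one_sub_rpow_mul_log_div_le (hα : -1 < α) {x p : ℝ} (hx : 0 < x)
    (hxp : x ≤ p) (hp : p ≤ 1) :
    (α + 1) * ∫ r in p..1, (1 - r) ^ α * Real.log (r / x)
      ≤ (1 - p) ^ (α + 1) * Real.log (1 / x) := by
  have hα₁ : 0 < α + 1 := by linarith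
  have hmono : ∫ r in p..1, (1 - r) ^ α * Real.log (r / x)
      ≤ ∫ r in p..1, (1 - r) ^ α * Real.log (1 / x) := by
    refine integral_mono_on hp
      (intervalIntegrable_one_sub_rpow_mul_log_div hα hx.ne' (hx.trans_le hxp) hp)
      ((intervalIntegrable_one_sub_rpow hα p 1).mul_const _)
      fun r hr => mul_le_mul_of_nonneg_left ?_ (Real.rpow_nonneg (by linarith [hr.2]) α)
    exact Real.log_le_log (div_pos (hx.trans_le (hxp.trans hr.1)) hx) (by gcongr; exact hr.2)
  rw [intervalIntegral.integral_mul_const, integral_one_sub_rpow hα] at hmono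
  calc (α + 1) * ∫ r in p..1, (1 - r) ^ α * Real.log (r / x)
      ≤ (α + 1) * ((1 - p) ^ (α + 1) / (α + 1) * Real.log (1 / x)) := by gcongr
    _ = _ := by field_simp

lemma log_one_div_le_two_mul_log_midpoint_div {x : ℝ} (hx : 0 < x) :
    Real.log (1 / x) ≤ 2 * Real.log ((1 + x) / 2 / x) := by
  have hsq : x ≤ ((1 + x) / 2) ^ 2 := by nlinarith [sq_nonneg (1 - x)]
  have := Real.log_le_log hx hsq
  rw [Real.log_pow, Nat.cast_ofNat] at this
  rw [Real.log_div (by positivity : (1 + x) / 2 ≠ 0) hx.ne', Real.log_div one_ne_zero hx.ne',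
    Real.log_one]
  linarith

lemma logWeight_le (hα : -1 < α) {x : ℝ} (hx : 0 < x) (hx₁ : x ≤ 1) :
    logWeight α x ≤ (1 - x) ^ (α + 1) * Real.log (1 / x) :=
  mul_integral_one_sub_rpow_mul_log_div_le hα hx le_rfl hx₁

lemma le_logWeight (hα : -1 < α) {x : ℝ} (hx : 0 < x) (hx₁ : x ≤ 1) :
    (1 / 2) ^ (α + 2) * (1 - x) ^ (α + 1) * Real.log (1 / x) ≤ logWeight α x := by
  set m := (1 + x) / 2 with hm_def
  have hxm : x ≤ m := by linarith
  have hm₁ : m ≤ 1 := by linarith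
  have hm : 0 < m := hx.trans_le hxm
  have hsplit : ∫ r in x..1, (1 - r) ^ α * Real.log (r / x)
      = (∫ r in x..m, (1 - r) ^ α * Real.log (r / x))
        + ∫ r in m..1, (1 - r) ^ α * Real.log (r / x) :=
    (integral_add_adjacent_intervals
      (intervalIntegrable_one_sub_rpow_mul_log_div hα hx.ne' hx hxm)
      (intervalIntegrable_one_sub_rpow_mul_log_div hα hx.ne' hm hm₁)).symm
  have hnear : 0 ≤ ∫ r in x..m, (1 - r) ^ α * Real.log (r / x) :=
    integral_nonneg hxm fun r hr => mul_nonneg (Real.rpow_nonneg (by linarith [hr.2]) α)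
      (Real.log_nonneg ((one_le_div hx).2 hr.1))
  have hpow : (1 - m) ^ (α + 1) = (1 / 2) ^ (α + 1) * (1 - x) ^ (α + 1) := by
    rw [← Real.mul_rpow (by norm_num) (by linarith), hm_def]
    ring_nf
  have hhalf : (1 / 2 : ℝ) ^ (α + 2) = (1 / 2) ^ (α + 1) * (1 / 2) := by
    rw [show α + 2 = α + 1 + 1 by ring, Real.rpow_add_one (by norm_num)]
  have hα₁ : 0 ≤ α + 1 := by linarith
  calc (1 / 2) ^ (α + 2) * (1 - x) ^ (α + 1) * Real.log (1 / x)
      = (1 / 2) ^ (α + 1) * (1 - x) ^ (α + 1) * (Real.log (1 / x) / 2) := by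
        rw [hhalf]; ring
    _ ≤ (1 / 2) ^ (α + 1) * (1 - x) ^ (α + 1) * Real.log (m / x) := by
        gcongr; linarith [log_one_div_le_two_mul_log_midpoint_div hx]
    _ = (1 - m) ^ (α + 1) * Real.log (m / x) := by rw [hpow]
    _ ≤ (α + 1) * ∫ r in m..1, (1 - r) ^ α * Real.log (r / x) :=
        le_mul_integral_one_sub_rpow_mul_log_div hα hx hxm hm₁
    _ ≤ logWeight α x := by
        rw [logWeight, hsplit, mul_add]
        exact le_add_of_nonneg_left (mul_nonneg hα₁ hnear)

end

/-- For `α > −1` and `w_α(z) = (α+1)∫_{|z|²}^1 (1−r)^α log(r/|z|²) dr`, there is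
`0 < c_α < 1` with `c_α (1−|z|²)^{α+1} log(1/|z|²) ≤ w_α(z) ≤ (1−|z|²)^{α+1} log(1/|z|²)`
for all `z` in the punctured unit disc. -/
theorem stmt_15 (α : ℝ) (hα : -1 < α) :
    ∃ c : ℝ, 0 < c ∧ c < 1 ∧
      ∀ z : ℂ, z ∈ Metric.ball (0:ℂ) 1 → z ≠ 0 →
        c * (1 - ‖z‖ ^ 2) ^ (α + 1) * Real.log (1 / ‖z‖ ^ 2)
            ≤ (α + 1) * ∫ r in (‖z‖ ^ 2)..1,
                (1 - r) ^ α * Real.log (r / ‖z‖ ^ 2) ∧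
        (α + 1) * (∫ r in (‖z‖ ^ 2)..1,
              (1 - r) ^ α * Real.log (r / ‖z‖ ^ 2))
            ≤ (1 - ‖z‖ ^ 2) ^ (α + 1) * Real.log (1 / ‖z‖ ^ 2) := by
  refine ⟨(1 / 2) ^ (α + 2), by positivity,
    Real.rpow_lt_one (by norm_num) (by norm_num) (by linarith), fun z hz hz₀ => ?_⟩
  have hx : 0 < ‖z‖ ^ 2 := by positivity
  have hx₁ : ‖z‖ ^ 2 ≤ 1 := pow_le_one₀ (norm_nonneg z) (mem_ball_zero_iff.1 hz).le
  exact ⟨le_logWeight hα hx hx₁, logWeight_le hα hx hx₁⟩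
end

section
/- Let v be a nonnegative subharmonic function on the unit disc, α ≥ −1, and set dμ(z) = (1−|z|²)^{α+2} v(z) dA(z), d\tilde{μ}(z) = |z|² dμ(z). Then there is a constant 0 < c_α < 1, independent of v, such that c_α ‖μ‖_{C(α)} ≤ ‖\tilde{μ}‖_{C(α)} ≤ ‖μ‖_{C(α)}, where ‖ν‖_{C(α)} = sup_{a∈D} ν(S(a))/(1−|a|²)^{α+2} is the (α+2)-Carleson norm over Carleson boxes S(a). -/
/-!
The upper bound is pointwise: `|z|² ≤ 1`. For the lower bound, on a box `S(a)` with `|a| ≥ 1/4`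
the extra weight satisfies `|z|² ≥ 1/16`. For `|a| < 1/4` the normalising factor
`(1 - |a|²)^(α+2)` is bounded below, and `μ̃(D) ≤ ‖μ̃‖` because `S(0)` is the whole disc, so it
suffices to bound `μ(D)` by `μ̃(D)`; away from `|z| < 1/4` this is again `|z|² ≥ 1/16`. On
`|z| < 1/4`, `v` is at most its maximum `v(z₀)` over the closed disc of radius `1/4`, and
integrating the sub-mean value inequality at `z₀` over the radii in `(1/2, 5/8)` bounds `v(z₀)`
by the integral of `v` over the annulus `1/4 ≤ |z| ≤ 7/8`, where the density of `μ̃` is bounded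
below by a positive multiple of `v`.
-/

open MeasureTheory Metric
open scoped ENNReal

/-- The Carleson box `S(a) = {r e^{it} : |a| ≤ r < 1, |t − arg a| ≤ π(1−|a|)}`. -/
def carlesonBox (a : ℂ) : Set ℂ :=
  {z : ℂ | ‖a‖ ≤ ‖z‖ ∧ ‖z‖ < 1 ∧
    |Complex.arg (z * (starRingEnd ℂ) a)| ≤ Real.pi * (1 - ‖a‖)}

/-- The `(α+2)`-Carleson norm `‖μ‖_{C(α)} = sup_{a ∈ D} μ(S(a))/(1−|a|²)^{α+2}`. -/
noncomputable def carlesonNorm (α : ℝ) (μ : Measure ℂ) : ℝ≥0∞ :=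
  ⨆ a : Metric.ball (0:ℂ) 1,
    μ (carlesonBox a) / ENNReal.ofReal ((1 - ‖(a : ℂ)‖ ^ 2) ^ (α + 2))

open Set Real

lemma measurableSet_carlesonBox (a : ℂ) : MeasurableSet (carlesonBox a) :=
  (measurableSet_le measurable_const continuous_norm.measurable).inter <|
    (measurableSet_lt continuous_norm.measurable measurable_const).inter <|
      measurableSet_le (Complex.measurable_arg.comp (measurable_mul_const _)).abs measurable_const

lemma ball_subset_carlesonBox_zero : ball (0 : ℂ) 1 ⊆ carlesonBox 0 := fun z hz =>
  ⟨by simp, mem_ball_zero_iff.1 hz, by simp [pi_pos.le]⟩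

section CarlesonNorm

variable {α : ℝ} {μ ν : Measure ℂ}

lemma carlesonNorm_mono (h : μ ≤ ν) : carlesonNorm α μ ≤ carlesonNorm α ν :=
  iSup_mono fun _ => ENNReal.div_le_div_right (h _) _

lemma measure_carlesonBox_le {a : ℂ} (ha : a ∈ ball (0 : ℂ) 1) :
    μ (carlesonBox a) ≤ carlesonNorm α μ * ENNReal.ofReal ((1 - ‖a‖ ^ 2) ^ (α + 2)) := by
  have hpos : 0 < (1 - ‖a‖ ^ 2) ^ (α + 2) := by
    have := mem_ball_zero_iff.1 ha
    exact rpow_pos_of_pos (by nlinarith [norm_nonneg a]) _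
  rw [← ENNReal.div_le_iff (by simpa using hpos) ENNReal.ofReal_ne_top]
  exact le_iSup (fun b : ball (0 : ℂ) 1 =>
    μ (carlesonBox b) / ENNReal.ofReal ((1 - ‖(b : ℂ)‖ ^ 2) ^ (α + 2))) ⟨a, ha⟩

lemma carlesonNorm_le_of_forall {K : ℝ≥0∞}
    (h : ∀ a ∈ ball (0 : ℂ) 1,
      μ (carlesonBox a) ≤ K * ENNReal.ofReal ((1 - ‖a‖ ^ 2) ^ (α + 2))) :
    carlesonNorm α μ ≤ K :=
  iSup_le fun a => ENNReal.div_le_of_le_mul (h a a.2)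

lemma measure_univ_le_carlesonNorm (hμ : ∀ᵐ z ∂μ, z ∈ ball (0 : ℂ) 1) :
    μ univ ≤ carlesonNorm α μ := by
  have hbox : μ univ ≤ μ (carlesonBox 0) :=
    measure_mono_ae <| hμ.mono fun z hz _ => ball_subset_carlesonBox_zero hz
  simpa using hbox.trans (measure_carlesonBox_le (α := α) (mem_ball_self one_pos))

end CarlesonNorm

lemma polarCoord_symm_eq_circleMap (p : ℝ × ℝ) :
    Complex.polarCoord.symm p = circleMap 0 p.1 p.2 := by
  simp [circleMap, Complex.exp_mul_I]

lemma ofReal_mul_le_lintegral_of_le_lintegral_circleMap {f : ℂ → ℝ≥0∞} (hf : Measurable f)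
    (z₀ : ℂ) {r₁ r₂ : ℝ} (hr₁ : 0 ≤ r₁) {c : ℝ≥0∞}
    (h : ∀ r ∈ Ioo r₁ r₂, c ≤ ∫⁻ θ in Ioo (-π) π, f (circleMap z₀ r θ)) :
    ENNReal.ofReal (r₁ * (r₂ - r₁)) * c ≤ ∫⁻ z, f z := by
  have hsub : Ioo r₁ r₂ ×ˢ Ioo (-π) π ⊆ polarCoord.target := by
    rw [polarCoord_target]
    exact prod_mono (fun r hr => lt_of_le_of_lt hr₁ hr.1) le_rfl
  have hmeas : Measurable fun p : ℝ × ℝ => ENNReal.ofReal p.1 * f (circleMap z₀ p.1 p.2) :=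
    (ENNReal.measurable_ofReal.comp measurable_fst).mul <|
      hf.comp circleMap.continuous.measurable
  calc ENNReal.ofReal (r₁ * (r₂ - r₁)) * c
      = ∫⁻ _ in Ioo r₁ r₂, ENNReal.ofReal r₁ * c := by
        rw [setLIntegral_const, Real.volume_Ioo, ENNReal.ofReal_mul hr₁]; ring
    _ ≤ ∫⁻ r in Ioo r₁ r₂, ENNReal.ofReal r * ∫⁻ θ in Ioo (-π) π, f (circleMap z₀ r θ) :=
        setLIntegral_mono' measurableSet_Ioo fun r hr =>
          mul_le_mul' (ENNReal.ofReal_le_ofReal hr.1.le) (h r hr)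
    _ = ∫⁻ p in Ioo r₁ r₂ ×ˢ Ioo (-π) π, ENNReal.ofReal p.1 * f (circleMap z₀ p.1 p.2) := by
        rw [Measure.volume_eq_prod, setLIntegral_prod _ hmeas.aemeasurable]
        simp_rw [lintegral_const_mul' _ _ ENNReal.ofReal_ne_top]
    _ = ∫⁻ p in Ioo r₁ r₂ ×ˢ Ioo (-π) π,
          ENNReal.ofReal p.1 • f (z₀ + Complex.polarCoord.symm p) := by
        simp_rw [polarCoord_symm_eq_circleMap, circleMap, zero_add, smul_eq_mul]
    _ ≤ ∫⁻ p in polarCoord.target, ENNReal.ofReal p.1 • f (z₀ + Complex.polarCoord.symm p) :=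
        lintegral_mono_set hsub
    _ = ∫⁻ z, f z := by
        rw [Complex.lintegral_comp_polarCoord_symm (fun z => f (z₀ + z)),
          lintegral_add_left_eq_self]

lemma SubharmonicOnDisc.ofReal_two_pi_mul_le_lintegral_circleMap {v : ℂ → ℝ}
    (hv : SubharmonicOnDisc v) (hv0 : ∀ z ∈ ball (0 : ℂ) 1, 0 ≤ v z) {z : ℂ} {r : ℝ}
    (hr : 0 < r) (hzr : closedBall z r ⊆ ball (0 : ℂ) 1) :
    ENNReal.ofReal (2 * π * v z) ≤
      ∫⁻ θ in Ioo (-π) π, ENNReal.ofReal (v (circleMap z r θ)) := by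
  have hmean : 2 * π * v z ≤ ∫ θ in Ioo (-π) π, v (circleMap z r θ) := by
    have h := hv.2 z (hzr (mem_closedBall_self hr.le)) r hr hzr
    rw [le_div_iff₀ two_pi_pos, mul_comm] at h
    have hper : ∫ θ in (0 : ℝ)..2 * π, v (circleMap z r θ) =
        ∫ θ in Ioo (-π) π, v (circleMap z r θ) := by
      rw [← integral_Ioc_eq_integral_Ioo,
        ← intervalIntegral.integral_of_le (by linarith [pi_pos])]
      have := ((periodic_circleMap z r).comp v).intervalIntegral_add_eq 0 (-π)
      rwa [zero_add, show -π + 2 * π = π by ring] at this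
    exact h.trans_eq hper
  have hcircle : ∀ θ, 0 ≤ v (circleMap z r θ) := fun θ =>
    hv0 _ (hzr (circleMap_mem_closedBall z hr.le θ))
  calc ENNReal.ofReal (2 * π * v z)
      ≤ ‖∫ θ in Ioo (-π) π, v (circleMap z r θ)‖ₑ := by
        rw [Real.enorm_eq_ofReal_abs]
        exact ENNReal.ofReal_le_ofReal (hmean.trans (le_abs_self _))
    _ ≤ ∫⁻ θ in Ioo (-π) π, ‖v (circleMap z r θ)‖ₑ := enorm_integral_le_lintegral_enorm _
    _ = ∫⁻ θ in Ioo (-π) π, ENNReal.ofReal (v (circleMap z r θ)) := by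
        simp_rw [Real.enorm_eq_ofReal_abs, abs_of_nonneg (hcircle _)]

lemma SubharmonicOnDisc.lintegral_ball_le_lintegral_annulus {v : ℂ → ℝ}
    (hv : SubharmonicOnDisc v) (hv0 : ∀ z ∈ ball (0 : ℂ) 1, 0 ≤ v z) :
    ∫⁻ z in ball (0 : ℂ) (1 / 4), ENNReal.ofReal (v z) ≤
      ∫⁻ z in closedBall (0 : ℂ) (7 / 8) \ ball 0 (1 / 4), ENNReal.ofReal (v z) := by
  classical
  set A := closedBall (0 : ℂ) (7 / 8) \ ball 0 (1 / 4)
  have hA : MeasurableSet A := measurableSet_closedBall.diff measurableSet_ball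
  have hAball : A ⊆ ball 0 1 := sdiff_subset.trans (closedBall_subset_ball (by norm_num))
  obtain ⟨z₀, hz₀, hmax⟩ := (isCompact_closedBall (0 : ℂ) (1 / 4)).exists_isMaxOn
    (nonempty_closedBall.2 (by norm_num)) (hv.1.mono (closedBall_subset_ball (by norm_num)))
  have hz₀' : ‖z₀‖ ≤ 1 / 4 := mem_closedBall_zero_iff.1 hz₀
  have hcircle : ∀ r ∈ Ioo (1 / 2 : ℝ) (5 / 8), ∀ θ, circleMap z₀ r θ ∈ A := by
    intro r hr θ
    have hnorm : ‖circleMap 0 r θ‖ = r := by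
      rw [norm_circleMap_zero, abs_of_pos (by linarith [hr.1])]
    have hc : circleMap z₀ r θ = z₀ + circleMap 0 r θ := by simp [circleMap]
    have h1 := norm_add_le z₀ (circleMap 0 r θ)
    have h2 := norm_sub_norm_le (circleMap 0 r θ) (-z₀)
    rw [norm_neg, sub_neg_eq_add, add_comm] at h2
    rw [hc, mem_sdiff, mem_closedBall_zero_iff, mem_ball_zero_iff, not_lt]
    constructor <;> linarith [hr.1, hr.2]
  have hf : Measurable (A.piecewise (fun z => ENNReal.ofReal (v z)) 0) :=
    (ENNReal.continuous_ofReal.comp_continuousOn (hv.1.mono hAball)).measurable_piecewise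
      continuousOn_const hA
  have hannulus : ENNReal.ofReal (1 / 2 * (5 / 8 - 1 / 2)) * ENNReal.ofReal (2 * π * v z₀) ≤
      ∫⁻ z in A, ENNReal.ofReal (v z) := by
    rw [← lintegral_indicator hA, ← piecewise_eq_indicator]
    refine ofReal_mul_le_lintegral_of_le_lintegral_circleMap hf z₀ (by norm_num) fun r hr => ?_
    simp only [piecewise_eq_of_mem _ _ _ (hcircle r hr _)]
    refine hv.ofReal_two_pi_mul_le_lintegral_circleMap hv0 (by linarith [hr.1])
      (closedBall_subset_ball' ?_)
    rw [dist_zero_right]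
    linarith [hr.2]
  calc ∫⁻ z in ball (0 : ℂ) (1 / 4), ENNReal.ofReal (v z)
      ≤ ∫⁻ _ in ball (0 : ℂ) (1 / 4), ENNReal.ofReal (v z₀) :=
        setLIntegral_mono' measurableSet_ball fun z hz =>
          ENNReal.ofReal_le_ofReal (hmax (ball_subset_closedBall hz))
    _ ≤ ENNReal.ofReal (1 / 2 * (5 / 8 - 1 / 2)) * ENNReal.ofReal (2 * π * v z₀) := by
        have hpi : (NNReal.pi : ℝ≥0∞) = ENNReal.ofReal π := by
          rw [← NNReal.coe_real_pi, ENNReal.ofReal_coe_nnreal]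
        have hvz₀ : 0 ≤ v z₀ := hv0 z₀ (closedBall_subset_ball (by norm_num) hz₀)
        rw [setLIntegral_const, Complex.volume_ball, ← ENNReal.ofReal_pow (by norm_num), hpi,
          ← ENNReal.ofReal_mul (by norm_num), ← ENNReal.ofReal_mul hvz₀,
          ← ENNReal.ofReal_mul (by norm_num)]
        exact ENNReal.ofReal_le_ofReal (by nlinarith [pi_pos])
    _ ≤ _ := hannulus

lemma ofReal_mul_le_ofReal_of_le_one {k t : ℝ} (hk₀ : 0 ≤ k) (hk₁ : k ≤ 1) :
    ENNReal.ofReal (k * t) ≤ ENNReal.ofReal t := by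
  rcases le_total t 0 with ht | ht
  · simp [ENNReal.ofReal_of_nonpos (mul_nonpos_of_nonneg_of_nonpos hk₀ ht)]
  · exact ENNReal.ofReal_le_ofReal (mul_le_of_le_one_left ht hk₁)

lemma ofReal_le_ofReal_mul_ofReal_mul {c k t : ℝ} (hc : 0 ≤ c) (hck : 1 ≤ c * k) :
    ENNReal.ofReal t ≤ ENNReal.ofReal c * ENNReal.ofReal (k * t) := by
  rcases le_total t 0 with ht | ht
  · simp [ENNReal.ofReal_of_nonpos ht]
  · rw [← ENNReal.ofReal_mul hc, ← mul_assoc]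
    exact ENNReal.ofReal_le_ofReal (le_mul_of_one_le_left ht hck)

lemma setLIntegral_ofReal_le_mul {X : Type*} [MeasurableSpace X] {ρ : Measure X} {s : Set X}
    (hs : MeasurableSet s) {c : ℝ} (hc : 0 ≤ c) {k t : X → ℝ} (hck : ∀ x ∈ s, 1 ≤ c * k x) :
    ∫⁻ x in s, ENNReal.ofReal (t x) ∂ρ ≤
      ENNReal.ofReal c * ∫⁻ x in s, ENNReal.ofReal (k x * t x) ∂ρ := by
  rw [← lintegral_const_mul' _ _ ENNReal.ofReal_ne_top]
  exact setLIntegral_mono' hs fun x hx => ofReal_le_ofReal_mul_ofReal_mul hc (hck x hx)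

noncomputable def discWithDensity (g : ℂ → ℝ) : Measure ℂ :=
  (volume.restrict (ball (0 : ℂ) 1)).withDensity fun z => ENNReal.ofReal (g z)

lemma ae_mem_ball_discWithDensity (g : ℂ → ℝ) :
    ∀ᵐ z ∂discWithDensity g, z ∈ ball (0 : ℂ) 1 :=
  (withDensity_absolutelyContinuous _ _).ae_le (ae_restrict_mem measurableSet_ball)

lemma discWithDensity_apply (g : ℂ → ℝ) (s : Set ℂ) :
    discWithDensity g s = ∫⁻ z in s, ENNReal.ofReal (g z) ∂volume.restrict (ball (0 : ℂ) 1) :=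
  withDensity_apply' _ s

lemma discWithDensity_apply_of_subset (g : ℂ → ℝ) {s : Set ℂ} (hs : s ⊆ ball (0 : ℂ) 1) :
    discWithDensity g s = ∫⁻ z in s, ENNReal.ofReal (g z) := by
  rw [discWithDensity_apply, Measure.restrict_restrict_of_subset hs]

lemma discWithDensity_norm_sq_mul_le (g : ℂ → ℝ) :
    discWithDensity (fun z => ‖z‖ ^ 2 * g z) ≤ discWithDensity g := by
  refine withDensity_mono ?_
  filter_upwards [ae_restrict_mem measurableSet_ball] with z hz
  exact ofReal_mul_le_ofReal_of_le_one (by positivity)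
    (pow_le_one₀ (norm_nonneg z) (mem_ball_zero_iff.1 hz).le)

lemma discWithDensity_le_mul_norm_sq_mul {s : Set ℂ} (hs : MeasurableSet s) {c : ℝ} (hc : 0 ≤ c)
    (hcs : ∀ z ∈ s, 1 ≤ c * ‖z‖ ^ 2) (g : ℂ → ℝ) :
    discWithDensity g s ≤ ENNReal.ofReal c * discWithDensity (fun z => ‖z‖ ^ 2 * g z) s := by
  simpa only [discWithDensity_apply] using setLIntegral_ofReal_le_mul hs hc hcs

section WeightedMeasures

variable {α : ℝ} {v : ℂ → ℝ}

lemma discWithDensity_ball_quarter_le (hα : 0 ≤ α + 2) (hv : SubharmonicOnDisc v)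
    (hv0 : ∀ z ∈ ball (0 : ℂ) 1, 0 ≤ v z) :
    discWithDensity (fun z => (1 - ‖z‖ ^ 2) ^ (α + 2) * v z) (ball 0 (1 / 4)) ≤
      ENNReal.ofReal (16 * (64 / 15) ^ (α + 2)) *
        discWithDensity (fun z => ‖z‖ ^ 2 * ((1 - ‖z‖ ^ 2) ^ (α + 2) * v z)) univ := by
  set A := closedBall (0 : ℂ) (7 / 8) \ ball 0 (1 / 4)
  have hA : MeasurableSet A := measurableSet_closedBall.diff measurableSet_ball
  have hAball : A ⊆ ball 0 1 := sdiff_subset.trans (closedBall_subset_ball (by norm_num))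
  have hweight : ∀ z ∈ ball (0 : ℂ) (1 / 4), 0 ≤ (1 - ‖z‖ ^ 2) ^ (α + 2) ∧
      (1 - ‖z‖ ^ 2) ^ (α + 2) ≤ 1 := by
    intro z hz
    have := mem_ball_zero_iff.1 hz
    have h0 : 0 ≤ 1 - ‖z‖ ^ 2 := by nlinarith [norm_nonneg z]
    exact ⟨rpow_nonneg h0 _, rpow_le_one h0 (by nlinarith [norm_nonneg z]) hα⟩
  have hannulus : ∀ z ∈ A,
      1 ≤ 16 * (64 / 15) ^ (α + 2) * (‖z‖ ^ 2 * (1 - ‖z‖ ^ 2) ^ (α + 2)) := by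
    intro z hz
    rw [mem_sdiff, mem_closedBall_zero_iff, mem_ball_zero_iff, not_lt] at hz
    have h1 : 1 ≤ 16 * ‖z‖ ^ 2 := by nlinarith
    have h2 : 1 ≤ ((64 / 15) * (1 - ‖z‖ ^ 2)) ^ (α + 2) :=
      one_le_rpow (by nlinarith [norm_nonneg z]) hα
    rw [mul_rpow (by norm_num) (by nlinarith [norm_nonneg z])] at h2
    calc (1 : ℝ) ≤ (16 * ‖z‖ ^ 2) * ((64 / 15) ^ (α + 2) * (1 - ‖z‖ ^ 2) ^ (α + 2)) :=
          one_le_mul_of_one_le_of_one_le h1 h2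
      _ = _ := by ring
  calc discWithDensity (fun z => (1 - ‖z‖ ^ 2) ^ (α + 2) * v z) (ball 0 (1 / 4))
      = ∫⁻ z in ball (0 : ℂ) (1 / 4), ENNReal.ofReal ((1 - ‖z‖ ^ 2) ^ (α + 2) * v z) :=
        discWithDensity_apply_of_subset _ (ball_subset_ball (by norm_num))
    _ ≤ ∫⁻ z in ball (0 : ℂ) (1 / 4), ENNReal.ofReal (v z) :=
        setLIntegral_mono' measurableSet_ball fun z hz =>
          ofReal_mul_le_ofReal_of_le_one (hweight z hz).1 (hweight z hz).2
    _ ≤ ∫⁻ z in A, ENNReal.ofReal (v z) := hv.lintegral_ball_le_lintegral_annulus hv0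
    _ ≤ ENNReal.ofReal (16 * (64 / 15) ^ (α + 2)) *
          ∫⁻ z in A, ENNReal.ofReal (‖z‖ ^ 2 * (1 - ‖z‖ ^ 2) ^ (α + 2) * v z) :=
        setLIntegral_ofReal_le_mul hA (by positivity) hannulus
    _ = ENNReal.ofReal (16 * (64 / 15) ^ (α + 2)) *
          discWithDensity (fun z => ‖z‖ ^ 2 * ((1 - ‖z‖ ^ 2) ^ (α + 2) * v z)) A := by
        simp_rw [discWithDensity_apply_of_subset _ hAball, mul_assoc]
    _ ≤ _ := by gcongr; exact subset_univ A

lemma discWithDensity_univ_le (hα : 0 ≤ α + 2) (hv : SubharmonicOnDisc v)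
    (hv0 : ∀ z ∈ ball (0 : ℂ) 1, 0 ≤ v z) :
    discWithDensity (fun z => (1 - ‖z‖ ^ 2) ^ (α + 2) * v z) univ ≤
      ENNReal.ofReal (16 * (64 / 15) ^ (α + 2) + 16) *
        discWithDensity (fun z => ‖z‖ ^ 2 * ((1 - ‖z‖ ^ 2) ^ (α + 2) * v z)) univ := by
  have hfar : ∀ z ∈ (ball (0 : ℂ) (1 / 4))ᶜ, 1 ≤ 16 * ‖z‖ ^ 2 := fun z hz => by
    rw [mem_compl_iff, mem_ball_zero_iff, not_lt] at hz
    nlinarith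
  have hcompl := discWithDensity_le_mul_norm_sq_mul measurableSet_ball.compl (by norm_num) hfar
    (fun z => (1 - ‖z‖ ^ 2) ^ (α + 2) * v z)
  calc _ ≤ discWithDensity (fun z => (1 - ‖z‖ ^ 2) ^ (α + 2) * v z) (ball 0 (1 / 4)) +
        discWithDensity (fun z => (1 - ‖z‖ ^ 2) ^ (α + 2) * v z) (ball 0 (1 / 4))ᶜ :=
        measure_univ_le_add_compl _
    _ ≤ _ := by
        rw [ENNReal.ofReal_add (by positivity) (by norm_num), add_mul]
        gcongr
        · exact discWithDensity_ball_quarter_le hα hv hv0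
        · exact hcompl.trans (by gcongr; exact subset_univ _)

end WeightedMeasures

theorem exists_carlesonNorm_discWithDensity_le {α : ℝ} (hα : 0 ≤ α + 2) :
    ∃ C : ℝ, 1 < C ∧ ∀ v : ℂ → ℝ, SubharmonicOnDisc v → (∀ z ∈ ball (0 : ℂ) 1, 0 ≤ v z) →
      carlesonNorm α (discWithDensity fun z => (1 - ‖z‖ ^ 2) ^ (α + 2) * v z) ≤
        ENNReal.ofReal C *
          carlesonNorm α
            (discWithDensity fun z => ‖z‖ ^ 2 * ((1 - ‖z‖ ^ 2) ^ (α + 2) * v z)) := by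
  set K : ℝ := 16 * (64 / 15) ^ (α + 2) + 16
  have hK : 16 ≤ K := le_add_of_nonneg_left (by positivity)
  have hgrowth : 1 ≤ (16 / 15 : ℝ) ^ (α + 2) := one_le_rpow (by norm_num) hα
  have h16 : 16 ≤ K * (16 / 15) ^ (α + 2) := by nlinarith
  refine ⟨K * (16 / 15) ^ (α + 2), by linarith, fun v hv hv0 => carlesonNorm_le_of_forall ?_⟩
  set μ := discWithDensity fun z => (1 - ‖z‖ ^ 2) ^ (α + 2) * v z
  set ν := discWithDensity fun z => ‖z‖ ^ 2 * ((1 - ‖z‖ ^ 2) ^ (α + 2) * v z)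
  intro a ha
  have ha' := mem_ball_zero_iff.1 ha
  rcases le_or_gt (1 / 4) ‖a‖ with hfar | hnear
  · calc μ (carlesonBox a) ≤ ENNReal.ofReal 16 * ν (carlesonBox a) :=
          discWithDensity_le_mul_norm_sq_mul (measurableSet_carlesonBox a) (by norm_num)
            (fun z hz => by nlinarith [hz.1]) _
      _ ≤ ENNReal.ofReal 16 *
            (carlesonNorm α ν * ENNReal.ofReal ((1 - ‖a‖ ^ 2) ^ (α + 2))) := by
          gcongr; exact measure_carlesonBox_le ha
      _ ≤ _ := by rw [← mul_assoc]; gcongr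
  · have hweight : 1 ≤ (16 / 15 : ℝ) ^ (α + 2) * (1 - ‖a‖ ^ 2) ^ (α + 2) := by
      rw [← mul_rpow (by norm_num) (by nlinarith [norm_nonneg a])]
      exact one_le_rpow (by nlinarith [norm_nonneg a]) hα
    calc μ (carlesonBox a) ≤ μ univ := measure_mono (subset_univ _)
      _ ≤ ENNReal.ofReal K * ν univ := discWithDensity_univ_le hα hv hv0
      _ ≤ ENNReal.ofReal K * carlesonNorm α ν := by
          gcongr; exact measure_univ_le_carlesonNorm (ae_mem_ball_discWithDensity _)
      _ ≤ ENNReal.ofReal K * carlesonNorm α ν *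
            ENNReal.ofReal ((16 / 15 : ℝ) ^ (α + 2) * (1 - ‖a‖ ^ 2) ^ (α + 2)) :=
          le_mul_of_one_le_right' (by simpa using hweight)
      _ = _ := by
          rw [ENNReal.ofReal_mul (by positivity), ENNReal.ofReal_mul (by positivity)]; ring

/-- For a nonnegative subharmonic `v` on the disc, with
`dμ = (1−|z|²)^{α+2} v dA` and `dμ̃ = |z|² dμ`, there is `0 < c_α < 1`,
independent of `v`, with `c_α ‖μ‖_{C(α)} ≤ ‖μ̃‖_{C(α)} ≤ ‖μ‖_{C(α)}`. -/
theorem stmt_16 (α : ℝ) (hα : -1 ≤ α) :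
    ∃ c : ℝ, 0 < c ∧ c < 1 ∧
      ∀ v : ℂ → ℝ, SubharmonicOnDisc v → (∀ z ∈ Metric.ball (0:ℂ) 1, 0 ≤ v z) →
        ENNReal.ofReal c *
            carlesonNorm α
              ((volume.restrict (Metric.ball (0:ℂ) 1)).withDensity
                fun z => ENNReal.ofReal ((1 - ‖z‖ ^ 2) ^ (α + 2) * v z))
          ≤ carlesonNorm α
              ((volume.restrict (Metric.ball (0:ℂ) 1)).withDensity
                fun z => ENNReal.ofReal
                  (‖z‖ ^ 2 * ((1 - ‖z‖ ^ 2) ^ (α + 2) * v z))) ∧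
        carlesonNorm α
            ((volume.restrict (Metric.ball (0:ℂ) 1)).withDensity
              fun z => ENNReal.ofReal
                (‖z‖ ^ 2 * ((1 - ‖z‖ ^ 2) ^ (α + 2) * v z)))
          ≤ carlesonNorm α
              ((volume.restrict (Metric.ball (0:ℂ) 1)).withDensity
                fun z => ENNReal.ofReal ((1 - ‖z‖ ^ 2) ^ (α + 2) * v z)) := by
  obtain ⟨C, hC, hle⟩ := exists_carlesonNorm_discWithDensity_le (α := α) (by linarith)
  have hC₀ : 0 < C := by linarith
  refine ⟨C⁻¹, inv_pos.2 hC₀, inv_lt_one_of_one_lt₀ hC, fun v hv hv0 =>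
    ⟨?_, carlesonNorm_mono (discWithDensity_norm_sq_mul_le _)⟩⟩
  calc ENNReal.ofReal C⁻¹ * carlesonNorm α (discWithDensity _)
      ≤ ENNReal.ofReal C⁻¹ * (ENNReal.ofReal C * carlesonNorm α (discWithDensity _)) := by
        gcongr; exact hle v hv hv0
    _ = _ := by
        rw [← mul_assoc, ← ENNReal.ofReal_mul (inv_nonneg.2 hC₀.le), inv_mul_cancel₀ hC₀.ne',
          ENNReal.ofReal_one, one_mul]
        rfl
end
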